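/- Let M be a non-degenerate Orlicz function satisfying the Δ₂ condition at zero, and let 𝒫 := {g_a : a ∈ ℓ_∞, a_n ≥ 0 for all n} with the norm ‖g_a‖_𝒫 := ‖a‖_∞ on span 𝒫 = {g_a : a ∈ ℓ_∞}. Then (𝒫, ‖·‖_𝒫) is a perturbation space on every nonempty, closed and bounded subset S of ℓ_M. -/

import Mathlib

open Filter Topology

/-- `σ_M(x) = Σ_{n} M(|x_n|) ∈ [0,∞]`. -/
noncomputable def sigmaM (M : ℝ → ℝ) (x : ℕ → ℝ) : ENNReal :=
  ∑' n, ENNReal.ofReal (M |x n|)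

/-- Membership in the Orlicz sequence space `ℓ_M`: `x` is a bounded sequence with
`σ_M(x/ρ) < ∞` for some `ρ > 0`. -/
def MemLM (M : ℝ → ℝ) (x : ℕ → ℝ) : Prop :=
  (∃ A : ℝ, ∀ n, |x n| ≤ A) ∧ ∃ ρ > 0, sigmaM M (fun n => x n / ρ) ≠ ⊤

/-- The Luxemburg norm `‖x‖ = inf {ρ > 0 : σ_M(x/ρ) ≤ 1}`. -/
noncomputable def luxNorm (M : ℝ → ℝ) (x : ℕ → ℝ) : ℝ :=
  sInf {ρ : ℝ | 0 < ρ ∧ sigmaM M (fun n => x n / ρ) ≤ 1}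

/-- An Orlicz function: continuous, non-decreasing, convex on `[0,∞)`, `M(0) = 0` and
`M(t) → ∞` as `t → ∞`. -/
structure IsOrliczFunction (M : ℝ → ℝ) : Prop where
  continuousOn : ContinuousOn M (Set.Ici 0)
  monotoneOn : MonotoneOn M (Set.Ici 0)
  convexOn : ConvexOn ℝ (Set.Ici 0) M
  map_zero : M 0 = 0
  tendsto_atTop : Tendsto M atTop atTop

/-- `M` satisfies the `Δ₂` condition at zero: `liminf_{t↓0} M(t)/M(2t) > 0`. -/
def Delta2Zero (M : ℝ → ℝ) : Prop :=
  0 < liminf (fun t => M t / M (2 * t)) (𝓝[>] (0 : ℝ))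

/-- `g_a(x) = Σ_n a_n M(|x_n|)`. -/
noncomputable def gA (M : ℝ → ℝ) (a : ℕ → ℝ) (x : ℕ → ℝ) : ℝ :=
  ∑' n, a n * M |x n|

/-- The Kuratowski index of non-compactness of `A ⊆ ℓ_M` with respect to the Luxemburg
norm: the infimum of all `ε > 0` such that `A` admits a finite `ε`-net in `ℓ_M`. -/
noncomputable def kurLM (M : ℝ → ℝ) (A : Set (ℕ → ℝ)) : ENNReal :=
  sInf {ε : ENNReal | 0 < ε ∧ ∃ F : Set (ℕ → ℝ), F.Finite ∧ (∀ y ∈ F, MemLM M y) ∧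
    ∀ x ∈ A, ∃ y ∈ F, ENNReal.ofReal (luxNorm M (fun n => x n - y n)) ≤ ε}

section lems
variable {M : ℝ → ℝ} (hM : IsOrliczFunction M) (hnd : ∀ t > (0 : ℝ), 0 < M t)
  (hΔ : Delta2Zero M)

include hM in
lemma M_nonneg (t : ℝ) (ht : 0 ≤ t) : 0 ≤ M t := by
  have := hM.monotoneOn (Set.self_mem_Ici) ht ht
  rw [hM.map_zero] at this; exact this

include hM in
lemma M_mono {s t : ℝ} (hs : 0 ≤ s) (hst : s ≤ t) : M s ≤ M t :=
  hM.monotoneOn hs (hs.trans hst) hst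

include hM in
/-- Continuity of `M` at `0` from the right. -/
lemma M_small : ∀ ε > (0:ℝ), ∃ γ > (0:ℝ), ∀ t, 0 ≤ t → t ≤ γ → M t ≤ ε := by
  intro ε hε
  have hc : ContinuousWithinAt M (Set.Ici 0) 0 := hM.continuousOn _ Set.self_mem_Ici
  have h2 : ∀ᶠ t in 𝓝[Set.Ici 0] (0:ℝ), M t < ε := by
    have := hc.tendsto (Metric.ball_mem_nhds (M 0) hε)
    filter_upwards [this] with t ht
    have := abs_lt.1 (mem_ball_iff_norm.1 ht)
    rw [hM.map_zero] at this; linarith [this.2]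
  rw [eventually_iff, Metric.mem_nhdsWithin_iff] at h2
  obtain ⟨γ, hγ, h⟩ := h2
  refine ⟨γ/2, by linarith, fun t ht htγ => ?_⟩
  have : M t < ε := h ⟨by rw [Metric.mem_ball, Real.dist_eq, sub_zero, abs_of_nonneg ht]; linarith, ht⟩
  linarith

include hM hnd hΔ in
/-- doubling: for every `T > 0` there is `C ≥ 1` with `M (2 t) ≤ C * M t` on `[0,T]`. -/
lemma M_doubling : ∀ T > (0:ℝ), ∃ C, 1 ≤ C ∧ ∀ t, 0 ≤ t → t ≤ T → M (2 * t) ≤ C * M t := by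
  intro T hT
  obtain ⟨c, hc, hc'⟩ : ∃ c > (0:ℝ), c < liminf (fun t => M t / M (2 * t)) (𝓝[>] (0 : ℝ)) :=
    ⟨_, half_pos hΔ, half_lt_self hΔ⟩
  have hbdd : IsBoundedUnder (fun x1 x2 => x1 ≥ x2) (𝓝[>] (0:ℝ))
      (fun t => M t / M (2 * t)) := by
    refine ⟨0, eventually_nhdsWithin_of_forall fun t ht => ?_⟩
    have ht' : (0:ℝ) < t := ht
    have h1 : 0 ≤ M t := M_nonneg hM t (le_of_lt ht')
    have h2 : 0 ≤ M (2*t) := M_nonneg hM _ (by positivity)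
    simp only [ge_iff_le]
    exact div_nonneg h1 h2
  have hev := eventually_lt_of_lt_liminf hc' hbdd
  rw [eventually_iff, Metric.mem_nhdsWithin_iff] at hev
  obtain ⟨γ, hγ, h⟩ := hev
  -- on (0, γ/2]: M(2t) ≤ (1/c) M t
  have hsmall : ∀ t, 0 < t → t ≤ γ/2 → M (2*t) ≤ (1/c) * M t := by
    intro t ht htγ
    have hq : c < M t / M (2*t) := h ⟨by rw [Metric.mem_ball, Real.dist_eq, sub_zero, abs_of_nonneg ht.le]; linarith, ht⟩
    have h2 : 0 < M (2*t) := hnd _ (by linarith)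
    rw [lt_div_iff₀ h2] at hq
    rw [one_div, inv_mul_eq_div, le_div_iff₀ hc]
    linarith
  by_cases hTγ : T ≤ γ/2
  · refine ⟨max (1/c) 1, le_max_right _ _, fun t ht htT => ?_⟩
    rcases eq_or_lt_of_le ht with rfl | ht'
    · simp [hM.map_zero, M_nonneg hM]
    · calc M (2*t) ≤ (1/c) * M t := hsmall t ht' (htT.trans hTγ)
        _ ≤ max (1/c) 1 * M t := by
            have := M_nonneg hM t ht
            exact mul_le_mul_of_nonneg_right (le_max_left _ _) this
  · push_neg at hTγ
    have hγ2 : 0 < γ/2 := by linarith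
    have hMγ : 0 < M (γ/2) := hnd _ hγ2
    set C := max (1/c) (M (2*T) / M (γ/2)) with hC
    refine ⟨max C 1, le_max_right _ _, fun t ht htT => ?_⟩
    have hMt : 0 ≤ M t := M_nonneg hM t ht
    rcases eq_or_lt_of_le ht with rfl | ht'
    · simp [hM.map_zero, M_nonneg hM]
    by_cases hcase : t ≤ γ/2
    · calc M (2*t) ≤ (1/c) * M t := hsmall t ht' hcase
        _ ≤ max C 1 * M t := by
            refine mul_le_mul_of_nonneg_right (le_trans (le_max_left _ _) (le_max_left _ _)) hMt
    · push_neg at hcase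
      have h1 : M (2*t) ≤ M (2*T) := M_mono hM (by linarith) (by linarith)
      have h2 : M (γ/2) ≤ M t := M_mono hM hγ2.le hcase.le
      calc M (2*t) ≤ M (2*T) := h1
        _ = (M (2*T) / M (γ/2)) * M (γ/2) := by field_simp
        _ ≤ max C 1 * M t := by
            refine mul_le_mul ?_ h2 hMγ.le ?_
            · exact le_trans (le_max_right _ _) (le_max_left _ _)
            · exact le_trans (by positivity) (le_max_right C 1)

include hM hnd hΔ in
lemma M_pow (k : ℕ) : ∀ T > (0:ℝ), ∃ C, 1 ≤ C ∧ ∀ t, 0 ≤ t → t ≤ T → M ((2:ℝ)^k * t) ≤ C * M t := by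
  induction k with
  | zero => exact fun T hT => ⟨1, le_refl _, fun t ht htT => by norm_num⟩
  | succ k ih =>
    intro T hT
    obtain ⟨C, hC1, hC⟩ := ih T hT
    obtain ⟨D, hD1, hD⟩ := M_doubling hM hnd hΔ ((2:ℝ)^k * T) (by positivity)
    refine ⟨D * C, by nlinarith, fun t ht htT => ?_⟩
    have h1 : (2:ℝ)^(k+1) * t = 2 * ((2:ℝ)^k * t) := by ring
    calc M ((2:ℝ)^(k+1) * t) = M (2 * ((2:ℝ)^k * t)) := by rw [h1]
      _ ≤ D * M ((2:ℝ)^k * t) := hD _ (by positivity)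
          (mul_le_mul_of_nonneg_left htT (by positivity))
      _ ≤ D * (C * M t) := mul_le_mul_of_nonneg_left (hC t ht htT) (by linarith)
      _ = D * C * M t := by ring

include hM hnd hΔ in
/-- scaling: for every `T > 0` and `s > 0` there is `C ≥ 1` with `M (s t) ≤ C * M t` on `[0,T]`. -/
lemma M_scale : ∀ T > (0:ℝ), ∀ s > (0:ℝ), ∃ C, 1 ≤ C ∧ ∀ t, 0 ≤ t → t ≤ T → M (s * t) ≤ C * M t := by
  intro T hT s hs
  obtain ⟨k, hk⟩ : ∃ k : ℕ, s ≤ 2^k := by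
    obtain ⟨k, hk⟩ := pow_unbounded_of_one_lt s (one_lt_two (α := ℝ))
    exact ⟨k, hk.le⟩
  obtain ⟨C, hC1, hC⟩ := M_pow hM hnd hΔ k T hT
  refine ⟨C, hC1, fun t ht htT => le_trans ?_ (hC t ht htT)⟩
  exact M_mono hM (by positivity) (mul_le_mul_of_nonneg_right hk ht)

include hM in
lemma sigma_mono {x y : ℕ → ℝ} (h : ∀ n, |x n| ≤ |y n|) : sigmaM M x ≤ sigmaM M y := by
  refine ENNReal.tsum_le_tsum fun n => ENNReal.ofReal_le_ofReal ?_
  exact M_mono hM (abs_nonneg _) (h n)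

include hM in
lemma sigma_div_mono {x : ℕ → ℝ} {ρ ρ' : ℝ} (hρ : 0 < ρ) (h : ρ ≤ ρ') :
    sigmaM M (fun n => x n / ρ') ≤ sigmaM M (fun n => x n / ρ) := by
  refine sigma_mono hM fun n => ?_
  rw [abs_div, abs_div, abs_of_pos hρ, abs_of_pos (lt_of_lt_of_le hρ h)]
  gcongr <;> first | exact abs_nonneg _ | exact h | exact le_refl _

lemma luxNorm_nonneg (x : ℕ → ℝ) : 0 ≤ luxNorm M x :=
  Real.sInf_nonneg fun _ hb => hb.1.le

lemma luxNorm_le {x : ℕ → ℝ} {ρ : ℝ} (hρ : 0 < ρ)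
    (h : sigmaM M (fun n => x n / ρ) ≤ 1) : luxNorm M x ≤ ρ :=
  csInf_le ⟨0, fun _ hb => hb.1.le⟩ ⟨hρ, h⟩

include hM in
/-- Every `x ∈ ℓ_M` has some `ρ` with modular at most one. -/
lemma memLM_exists_le_one {x : ℕ → ℝ} (hx : MemLM M x) :
    ∃ ρ, 0 < ρ ∧ sigmaM M (fun n => x n / ρ) ≤ 1 := by
  obtain ⟨⟨A, hA⟩, ρ₀, hρ₀, hfin⟩ := hx
  have hA0 : 0 ≤ A := le_trans (abs_nonneg _) (hA 0)
  set f : ℕ → ENNReal := fun n => ENNReal.ofReal (M |x n / ρ₀|) with hf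
  obtain ⟨N, hN⟩ : ∃ N, ∑' k, f (k + N) ≤ 1/2 := by
    have htt := ENNReal.tendsto_sum_nat_add f hfin
    have hev : ∀ᶠ N in atTop, ∑' k, f (k + N) < 1/2 :=
      htt.eventually_lt_const (by norm_num)
    obtain ⟨N, hN⟩ := hev.exists
    exact ⟨N, hN.le⟩
  obtain ⟨γ, hγ, hMγ⟩ := M_small hM (1/(2*(N+1))) (by positivity)
  set ρ : ℝ := max ρ₀ ((A+1)/γ) with hρdef
  have hρpos : 0 < ρ := lt_of_lt_of_le hρ₀ (le_max_left _ _)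
  refine ⟨ρ, hρpos, ?_⟩
  have hsplit := Summable.sum_add_tsum_nat_add' (f := fun n => ENNReal.ofReal (M |x n / ρ|))
    (k := N) ENNReal.summable
  rw [show sigmaM M (fun n => x n / ρ) = ∑' n, ENNReal.ofReal (M |x n / ρ|) from rfl, ← hsplit]
  have hhead : (∑ i ∈ Finset.range N, ENNReal.ofReal (M |x i / ρ|)) ≤ 1/2 := by
    have hone : ∀ i, ENNReal.ofReal (M |x i / ρ|) ≤ ENNReal.ofReal (1/(2*(N+1))) := by
      intro i
      refine ENNReal.ofReal_le_ofReal (hMγ _ (abs_nonneg _) ?_)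
      rw [abs_div, abs_of_pos hρpos]
      rw [div_le_iff₀ hρpos]
      have h1 : (A+1)/γ ≤ ρ := le_max_right _ _
      have h2 : γ * ((A+1)/γ) = A + 1 := by field_simp
      nlinarith [hA i, abs_nonneg (x i), mul_le_mul_of_nonneg_left h1 hγ.le]
    calc (∑ i ∈ Finset.range N, ENNReal.ofReal (M |x i / ρ|))
        ≤ ∑ _i ∈ Finset.range N, ENNReal.ofReal (1/(2*(N+1))) :=
          Finset.sum_le_sum fun i _ => hone i
      _ = (N : ENNReal) * ENNReal.ofReal (1/(2*(N+1))) := by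
          rw [Finset.sum_const, Finset.card_range]; simp [nsmul_eq_mul]
      _ = ENNReal.ofReal (N * (1/(2*(N+1)))) := by
          rw [ENNReal.ofReal_mul' (by positivity), ENNReal.ofReal_natCast]
      _ ≤ 1/2 := by
          rw [show (1:ENNReal)/2 = ENNReal.ofReal (1/2) by
            rw [ENNReal.ofReal_div_of_pos] <;> norm_num]
          refine ENNReal.ofReal_le_ofReal ?_
          rw [mul_one_div, div_le_div_iff₀ (by positivity) (by norm_num)]
          nlinarith [Nat.cast_nonneg (α := ℝ) N]
  have htail : (∑' k, ENNReal.ofReal (M |x (k + N) / ρ|)) ≤ 1/2 := by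
    refine le_trans (ENNReal.tsum_le_tsum fun k => ?_) hN
    refine ENNReal.ofReal_le_ofReal (M_mono hM (abs_nonneg _) ?_)
    rw [abs_div, abs_div, abs_of_pos hρ₀, abs_of_pos hρpos]
    gcongr <;> first | exact abs_nonneg _ | exact le_max_left _ _
  calc _ ≤ (1:ENNReal)/2 + 1/2 := add_le_add hhead htail
    _ = 1 := ENNReal.add_halves 1

include hM in
lemma sigma_le_one_of_norm_lt {x : ℕ → ℝ} {ρ : ℝ} (hx : MemLM M x)
    (h : luxNorm M x < ρ) : sigmaM M (fun n => x n / ρ) ≤ 1 := by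
  obtain ⟨ρ₁, hρ₁, hσ₁⟩ := memLM_exists_le_one hM hx
  have hne : {ρ : ℝ | 0 < ρ ∧ sigmaM M (fun n => x n / ρ) ≤ 1}.Nonempty := ⟨ρ₁, hρ₁, hσ₁⟩
  have hbdd : BddBelow {ρ : ℝ | 0 < ρ ∧ sigmaM M (fun n => x n / ρ) ≤ 1} :=
    ⟨0, fun _ hb => hb.1.le⟩
  obtain ⟨ρ'', ⟨hρ''pos, hρ''σ⟩, hlt⟩ := (csInf_lt_iff hbdd hne).1 h
  exact le_trans (sigma_div_mono hM hρ''pos hlt.le) hρ''σ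

include hM in
/-- There is `t⋆ ≥ 1` with `M t⋆ > 1`. -/
lemma exists_tstar : ∃ t : ℝ, 1 ≤ t ∧ 1 < M t := by
  have h := (hM.tendsto_atTop.eventually_gt_atTop 1).and (eventually_ge_atTop (1:ℝ))
  obtain ⟨t, h1, h2⟩ := h.exists
  exact ⟨t, h2, h1⟩

include hM in
lemma coord_bound {x : ℕ → ℝ} {ρ t' : ℝ} (hρ : 0 < ρ) (ht' : 1 < M t') (ht'0 : 0 ≤ t')
    (h : sigmaM M (fun n => x n / ρ) ≤ 1) : ∀ n, |x n| ≤ ρ * t' := by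
  intro n
  have h1 : ENNReal.ofReal (M |x n / ρ|) ≤ 1 :=
    le_trans (ENNReal.le_tsum n) h
  have h2 : M (|x n| / ρ) ≤ 1 := by
    rw [← ENNReal.ofReal_one] at h1
    have h3 := (ENNReal.ofReal_le_ofReal_iff (by norm_num)).1 h1
    rwa [abs_div, abs_of_pos hρ] at h3
  by_contra hcon
  push_neg at hcon
  have hle : t' ≤ |x n| / ρ := by rw [le_div_iff₀ hρ]; linarith [mul_comm ρ t']
  exact absurd (le_trans (M_mono hM ht'0 hle) h2) (by linarith)

lemma sigma_bound {x : ℕ → ℝ} {ρ T C : ℝ} (hρ : 0 < ρ)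
    (hxT : ∀ n, |x n| / ρ ≤ T)
    (hC : ∀ t, 0 ≤ t → t ≤ T → M (ρ * t) ≤ C * M t) (hC0 : 0 ≤ C) :
    sigmaM M x ≤ ENNReal.ofReal C * sigmaM M (fun n => x n / ρ) := by
  rw [show sigmaM M (fun n => x n / ρ) = ∑' n, ENNReal.ofReal (M |x n / ρ|) from rfl,
    ← ENNReal.tsum_mul_left]
  refine ENNReal.tsum_le_tsum fun n => ?_
  rw [← ENNReal.ofReal_mul hC0]
  refine ENNReal.ofReal_le_ofReal ?_
  have h1 : |x n| = ρ * (|x n| / ρ) := by field_simp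
  calc M |x n| = M (ρ * (|x n| / ρ)) := by rw [← h1]
    _ ≤ C * M (|x n| / ρ) := hC _ (by positivity) (hxT n)
    _ = C * M |x n / ρ| := by rw [abs_div, abs_of_pos hρ]

lemma summable_of_sigma_ne_top {x : ℕ → ℝ} (hfin : sigmaM M x ≠ ⊤)
    (hnn : ∀ n, 0 ≤ M |x n|) : Summable fun n => M |x n| := by
  have h := ENNReal.summable_toReal hfin
  exact h.congr fun n => ENNReal.toReal_ofReal (hnn n)

lemma sigma_eq_ofReal {x : ℕ → ℝ} (hnn : ∀ n, 0 ≤ M |x n|)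
    (hs : Summable fun n => M |x n|) :
    sigmaM M x = ENNReal.ofReal (∑' n, M |x n|) :=
  (ENNReal.ofReal_tsum_of_nonneg hnn hs).symm

include hM in
lemma M_comb {p q w₁ w₂ : ℝ} (hp : (0:ℝ) ≤ p) (hq : 0 ≤ q) (hw₁ : 0 ≤ w₁) (hw₂ : 0 ≤ w₂)
    (hw : w₁ + w₂ = 1) : M (w₁*p + w₂*q) ≤ w₁ * M p + w₂ * M q :=
  hM.convexOn.2 hp hq hw₁ hw₂ hw

lemma sigma_real_bound {z : ℕ → ℝ} {r : ℝ} (hr : 0 ≤ r)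
    (h : sigmaM M z ≤ ENNReal.ofReal r) (hnn : ∀ n, 0 ≤ M |z n|) :
    Summable (fun n => M |z n|) ∧ ∑' n, M |z n| ≤ r := by
  have hfin : sigmaM M z ≠ ⊤ := ne_top_of_le_ne_top ENNReal.ofReal_ne_top h
  have hs := summable_of_sigma_ne_top (M := M) hfin hnn
  refine ⟨hs, ?_⟩
  rw [sigma_eq_ofReal hnn hs] at h
  exact (ENNReal.ofReal_le_ofReal_iff hr).1 h

include hM in
lemma memLM_sub {x y : ℕ → ℝ} (hx : MemLM M x) (hy : MemLM M y) :
    MemLM M (fun n => x n - y n) := by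
  obtain ⟨⟨Ax, hAx⟩, ρx, hρx, hfx⟩ := hx
  obtain ⟨⟨Ay, hAy⟩, ρy, hρy, hfy⟩ := hy
  have hρ : (0:ℝ) < ρx + ρy := by linarith
  refine ⟨⟨Ax + Ay, fun n => le_trans (abs_sub _ _) (add_le_add (hAx n) (hAy n))⟩,
    ρx + ρy, hρ, ?_⟩
  set ρ := ρx + ρy
  have hterm : ∀ n, ENNReal.ofReal (M |(x n - y n) / ρ|) ≤
      ENNReal.ofReal (ρx/ρ) * ENNReal.ofReal (M |x n / ρx|) +
      ENNReal.ofReal (ρy/ρ) * ENNReal.ofReal (M |y n / ρy|) := by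
    intro n
    rw [← ENNReal.ofReal_mul (by positivity), ← ENNReal.ofReal_mul (by positivity)]
    refine le_trans (ENNReal.ofReal_le_ofReal ?_) ENNReal.ofReal_add_le
    have h1 : |(x n - y n)/ρ| ≤ (ρx/ρ) * (|x n|/ρx) + (ρy/ρ) * (|y n|/ρy) := by
      rw [abs_div, abs_of_pos hρ]
      have : (ρx/ρ) * (|x n|/ρx) + (ρy/ρ) * (|y n|/ρy) = (|x n| + |y n|)/ρ := by
        field_simp
      rw [this]
      gcongr
      exact abs_sub _ _
    calc M |(x n - y n)/ρ| ≤ M ((ρx/ρ) * (|x n|/ρx) + (ρy/ρ) * (|y n|/ρy)) :=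
          M_mono hM (abs_nonneg _) h1
      _ ≤ (ρx/ρ) * M (|x n|/ρx) + (ρy/ρ) * M (|y n|/ρy) := by
          refine M_comb hM (by positivity) (by positivity) (by positivity)
            (by positivity) (by rw [← add_div, div_self hρ.ne'])
      _ = (ρx/ρ) * M |x n / ρx| + (ρy/ρ) * M |y n / ρy| := by
          rw [abs_div, abs_of_pos hρx, abs_div, abs_of_pos hρy]
  have hsum : sigmaM M (fun n => (x n - y n)/ρ) ≤
      ENNReal.ofReal (ρx/ρ) * sigmaM M (fun n => x n / ρx) +
      ENNReal.ofReal (ρy/ρ) * sigmaM M (fun n => y n / ρy) := by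
    refine le_trans (ENNReal.tsum_le_tsum hterm) ?_
    rw [ENNReal.tsum_add, ENNReal.tsum_mul_left, ENNReal.tsum_mul_left]
    exact le_refl _
  refine ne_top_of_le_ne_top ?_ hsum
  exact ENNReal.add_ne_top.2 ⟨ENNReal.mul_ne_top ENNReal.ofReal_ne_top hfx,
    ENNReal.mul_ne_top ENNReal.ofReal_ne_top hfy⟩

include hM hnd hΔ in
lemma memLM_summable {x : ℕ → ℝ} (hx : MemLM M x) : Summable fun n => M |x n| := by
  obtain ⟨⟨A, hA⟩, ρ, hρ, hfin⟩ := hx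
  have hA0 : 0 ≤ A := le_trans (abs_nonneg _) (hA 0)
  set s := max ρ 1 with hs
  have hs1 : (1:ℝ) ≤ s := le_max_right _ _
  have hs0 : (0:ℝ) < s := by linarith
  obtain ⟨C, hC1, hC⟩ := M_scale hM hnd hΔ (A+1) (by linarith) s hs0
  have hb := sigma_bound (M := M) (x := x) (ρ := s) (T := A+1) hs0
    (fun n => by
      rw [div_le_iff₀ hs0]
      calc |x n| ≤ A := hA n
        _ ≤ (A+1) * 1 := by linarith
        _ ≤ (A+1) * s := by nlinarith)
    hC (by linarith)
  have hfin2 : sigmaM M (fun n => x n / s) ≠ ⊤ :=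
    ne_top_of_le_ne_top hfin (sigma_div_mono hM hρ (le_max_left _ _))
  have : sigmaM M x ≠ ⊤ := by
    refine ne_top_of_le_ne_top ?_ hb
    exact ENNReal.mul_ne_top ENNReal.ofReal_ne_top hfin2
  exact summable_of_sigma_ne_top this fun n => M_nonneg hM _ (abs_nonneg _)

end lems

section main
variable {M : ℝ → ℝ} (hM : IsOrliczFunction M) (hnd : ∀ t > (0 : ℝ), 0 < M t)
  (hΔ : Delta2Zero M)

lemma bddAbove_abs {a : ℕ → ℝ} (h : ∃ A, ∀ n, |a n| ≤ A) :
    BddAbove (Set.range fun n => |a n|) := by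
  obtain ⟨A, hA⟩ := h
  exact ⟨A, by rintro _ ⟨n, rfl⟩; exact hA n⟩

include hM hnd hΔ in
lemma gA_add (a b : ℕ → ℝ) (ha : ∃ A, ∀ n, |a n| ≤ A) (hb : ∃ B, ∀ n, |b n| ≤ B)
    (x : ℕ → ℝ) (hx : MemLM M x) :
    gA M (fun n => a n + b n) x = gA M a x + gA M b x := by
  have hsx := memLM_summable hM hnd hΔ hx
  have key : ∀ c : ℕ → ℝ, (∃ A, ∀ n, |c n| ≤ A) → Summable fun n => c n * M |x n| := by
    rintro c ⟨A, hA⟩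
    have hA0 : 0 ≤ A := le_trans (abs_nonneg _) (hA 0)
    refine Summable.of_abs (Summable.of_nonneg_of_le (fun n => abs_nonneg _)
      (fun n => ?_) (hsx.mul_left A))
    rw [abs_mul, abs_of_nonneg (M_nonneg hM _ (abs_nonneg _))]
    exact mul_le_mul_of_nonneg_right (hA n) (M_nonneg hM _ (abs_nonneg _))
  show (∑' n, (a n + b n) * M |x n|) = _
  rw [show (fun n => (a n + b n) * M |x n|) =
    (fun n => a n * M |x n| + b n * M |x n|) from funext fun n => add_mul _ _ _]
  exact Summable.tsum_add (key a ha) (key b hb)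

lemma gA_smul (a : ℕ → ℝ) (c : ℝ) (x : ℕ → ℝ) :
    gA M (fun n => c * a n) x = c * gA M a x := by
  show (∑' n, (c * a n) * M |x n|) = c * ∑' n, a n * M |x n|
  simp_rw [mul_assoc]
  exact tsum_mul_left

end main

lemma summable_mul_abs {M : ℝ → ℝ} (hM : IsOrliczFunction M) {x a : ℕ → ℝ}
    (hsx : Summable fun n => M |x n|) {A : ℝ} (hA : ∀ n, |a n| ≤ A) :
    Summable (fun n => |a n * M (|x n|)|) ∧ Summable (fun n => a n * M |x n|) := by
  have h1 : Summable (fun n => |a n * M (|x n|)|) := by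
    refine Summable.of_nonneg_of_le (fun n => abs_nonneg _) (fun n => ?_) (hsx.mul_left A)
    rw [abs_mul, abs_of_nonneg (M_nonneg hM _ (abs_nonneg _))]
    exact mul_le_mul_of_nonneg_right (hA n) (M_nonneg hM _ (abs_nonneg _))
  exact ⟨h1, h1.of_abs⟩

/-- one-sided modular difference bound -/
lemma M_diff_one {M : ℝ → ℝ} (hM : IsOrliczFunction M) {u v d T C₂ σ' : ℝ} (hu : 0 ≤ u) (hv : 0 ≤ v) (hvT : v ≤ T)
    (hd0 : 0 ≤ d) (hd : u - v ≤ d) (hσ' : 0 < σ') (hσ'1 : σ' ≤ 1)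
    (hC₂ : ∀ t, 0 ≤ t → t ≤ T → M (2*t) ≤ C₂ * M t) (hC₂1 : 1 ≤ C₂) :
    M u - M v ≤ σ' * (C₂ - 1) * M v + σ' * M ((1 + 1/σ') * d) := by
  have hMv : 0 ≤ M v := M_nonneg hM v hv
  have hMd : 0 ≤ M ((1 + 1/σ') * d) := M_nonneg hM _ (by positivity)
  have h1 : M u ≤ M (v + d) := M_mono hM hu (by linarith)
  have h2 : M (v + d) ≤ (1/(1+σ')) * M ((1+σ')*v) + (σ'/(1+σ')) * M ((1 + 1/σ') * d) := by
    have hcomb := M_comb hM (p := (1+σ')*v) (q := (1 + 1/σ')*d) (w₁ := 1/(1+σ'))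
      (w₂ := σ'/(1+σ')) (by positivity) (by positivity) (by positivity) (by positivity)
      (by field_simp)
    have heq : (1/(1+σ')) * ((1+σ')*v) + (σ'/(1+σ')) * ((1 + 1/σ') * d) = v + d := by
      field_simp
      ring
    rwa [heq] at hcomb
  have h3 : M ((1+σ')*v) ≤ M v + σ' * (C₂ - 1) * M v := by
    have h4 := M_comb hM (p := v) (q := 2*v) (w₁ := 1-σ') (w₂ := σ') hv (by linarith)
      (by linarith) hσ'.le (by ring)
    have heq : (1-σ') * v + σ' * (2*v) = (1+σ')*v := by ring
    rw [heq] at h4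
    have h5 : M (2*v) ≤ C₂ * M v := hC₂ v hv hvT
    nlinarith
  have h6 : (1/(1+σ')) * M ((1+σ')*v) ≤ M ((1+σ')*v) := by
    have : 0 ≤ M ((1+σ')*v) := M_nonneg hM _ (by positivity)
    rw [div_mul_eq_mul_div, div_le_iff₀ (by positivity)]
    nlinarith
  have h7 : (σ'/(1+σ')) * M ((1 + 1/σ') * d) ≤ σ' * M ((1 + 1/σ') * d) :=
    mul_le_mul_of_nonneg_right (div_le_self hσ'.le (by linarith)) hMd
  nlinarith

lemma head_sum_le_half {g : ℕ → ℝ} {N : ℕ} (h : ∀ i, i < N → g i ≤ 1/(2*(N+1))) :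
    (∑ i ∈ Finset.range N, ENNReal.ofReal (g i)) ≤ 1/2 := by
  calc ∑ i ∈ Finset.range N, ENNReal.ofReal (g i)
      ≤ ∑ _i ∈ Finset.range N, ENNReal.ofReal (1/(2*(N+1))) :=
        Finset.sum_le_sum fun i hi => ENNReal.ofReal_le_ofReal (h i (Finset.mem_range.1 hi))
    _ = (N : ENNReal) * ENNReal.ofReal (1/(2*(N+1))) := by
        rw [Finset.sum_const, Finset.card_range]; simp [nsmul_eq_mul]
    _ = ENNReal.ofReal (N * (1/(2*(N+1)))) := by
        rw [ENNReal.ofReal_mul' (by positivity), ENNReal.ofReal_natCast]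
    _ ≤ 1/2 := by
        rw [show (1:ENNReal)/2 = ENNReal.ofReal (1/2) by
          rw [ENNReal.ofReal_div_of_pos] <;> norm_num]
        refine ENNReal.ofReal_le_ofReal ?_
        rw [mul_one_div, div_le_div_iff₀ (by positivity) (by norm_num)]
        nlinarith [Nat.cast_nonneg (α := ℝ) N]


set_option maxHeartbeats 2000000 in
/-- Let `M` be a non-degenerate Orlicz function with `Δ₂` at zero. Then the family
`𝒫 = {g_a : a ∈ ℓ_∞, a ≥ 0}` with `‖g_a‖_𝒫 = ‖a‖_∞` is a perturbation space on every
nonempty closed bounded subset `S` of `ℓ_M`: the `g_a` are continuous and bounded on `S`;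
`𝒫` is a convex cone and `span 𝒫 = {g_a : a ∈ ℓ_∞}` (addition and nonnegative scaling
of the `g_a`'s correspond to those of the `a`'s); `‖·‖_𝒫 = ‖·‖_∞` is a complete norm
dominating the uniform convergence on `S`; and the localization axiom (iii) holds. -/
theorem stmt10 (M : ℝ → ℝ) (hM : IsOrliczFunction M) (hnd : ∀ t > (0 : ℝ), 0 < M t)
    (hΔ : Delta2Zero M)
    (S : Set (ℕ → ℝ)) (hS : S.Nonempty)
    (hSsub : ∀ x ∈ S, MemLM M x)
    (hSbdd : ∃ K : ℝ, ∀ x ∈ S, luxNorm M x ≤ K)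
    (hScl : ∀ x, MemLM M x →
      (∀ ε > (0 : ℝ), ∃ y ∈ S, luxNorm M (fun n => x n - y n) < ε) → x ∈ S) :
    -- every `g_a`, `a ∈ ℓ_∞`, is continuous and bounded on `S`
    (∀ a : ℕ → ℝ, (∃ A, ∀ n, |a n| ≤ A) →
      (∀ x ∈ S, ∀ ε > (0 : ℝ), ∃ δ > (0 : ℝ), ∀ y ∈ S,
        luxNorm M (fun n => x n - y n) < δ → |gA M a x - gA M a y| < ε) ∧
      (∃ c : ℝ, ∀ x ∈ S, |gA M a x| ≤ c)) ∧
    -- (i) cone and span structure: `g_{a+b} = g_a + g_b`, `g_{c·a} = c·g_a` on `ℓ_M`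
    (∀ a b : ℕ → ℝ, (∃ A, ∀ n, |a n| ≤ A) → (∃ B, ∀ n, |b n| ≤ B) →
      ∀ x, MemLM M x → gA M (fun n => a n + b n) x = gA M a x + gA M b x) ∧
    (∀ a : ℕ → ℝ, ∀ c : ℝ, (∃ A, ∀ n, |a n| ≤ A) →
      ∀ x, MemLM M x → gA M (fun n => c * a n) x = c * gA M a x) ∧
    -- (ii) `‖a‖_∞ = ⨆ n, |a n|` is a norm ...
    (∀ a : ℕ → ℝ, (∃ A, ∀ n, |a n| ≤ A) →
      (0 ≤ ⨆ n, |a n|) ∧ ((⨆ n, |a n|) = 0 ↔ a = fun _ => 0)) ∧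
    (∀ a b : ℕ → ℝ, (∃ A, ∀ n, |a n| ≤ A) → (∃ B, ∀ n, |b n| ≤ B) →
      (⨆ n, |a n + b n|) ≤ (⨆ n, |a n|) + ⨆ n, |b n|) ∧
    (∀ a : ℕ → ℝ, ∀ c : ℝ, (∃ A, ∀ n, |a n| ≤ A) →
      (⨆ n, |c * a n|) = |c| * ⨆ n, |a n|) ∧
    -- ... dominating the uniform convergence on `S` ...
    (∃ c > (0 : ℝ), ∀ a : ℕ → ℝ, (∃ A, ∀ n, |a n| ≤ A) →
      ∀ x ∈ S, |gA M a x| ≤ c * ⨆ n, |a n|) ∧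
    -- ... and complete
    (∀ u : ℕ → ℕ → ℝ, (∀ k, ∃ A, ∀ n, |u k n| ≤ A) →
      (∀ ε > (0 : ℝ), ∃ K : ℕ, ∀ j ≥ K, ∀ k ≥ K, (⨆ n, |u j n - u k n|) ≤ ε) →
      ∃ a : ℕ → ℝ, (∃ A, ∀ n, |a n| ≤ A) ∧
        Tendsto (fun k => ⨆ n, |u k n - a n|) atTop (𝓝 0)) ∧
    -- (iii) the localization axiom
    (∀ ε > (0 : ℝ), ∃ δ > (0 : ℝ), ∀ x ∈ S, ∃ a : ℕ → ℝ,
      (∀ n, 0 ≤ a n) ∧ (∃ A, ∀ n, |a n| ≤ A) ∧ (⨆ n, |a n|) ≤ ε ∧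
      gA M a x ≤ sInf (gA M a '' S) + δ ∧
      kurLM M {y ∈ S | gA M a y ≤ sInf (gA M a '' S) + 3 * δ} ≤ ENNReal.ofReal ε) := by
  -- shared setup
  obtain ⟨K, hK⟩ := hSbdd
  obtain ⟨tstar, hts1, hts2⟩ := exists_tstar hM
  have hts0 : (0:ℝ) ≤ tstar := by linarith
  set K₁ : ℝ := max K 0 + 1 with hK₁def
  have hK₁ : (0:ℝ) < K₁ := by positivity
  have hσS : ∀ x ∈ S, sigmaM M (fun n => x n / K₁) ≤ 1 := by
    intro x hx
    refine sigma_le_one_of_norm_lt hM (hSsub x hx) ?_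
    calc luxNorm M x ≤ K := hK x hx
      _ ≤ max K 0 := le_max_left _ _
      _ < K₁ := by rw [hK₁def]; linarith
  set T : ℝ := K₁ * tstar with hTdef
  have hT : (0:ℝ) < T := by
    have : (1:ℝ) ≤ tstar := hts1
    nlinarith
  have hcoord : ∀ x ∈ S, ∀ n, |x n| ≤ T :=
    fun x hx => coord_bound hM hK₁ hts2 hts0 (hσS x hx)
  obtain ⟨C₁, hC₁1, hC₁⟩ := M_scale hM hnd hΔ tstar (by linarith) K₁ hK₁
  have hC₁0 : (0:ℝ) ≤ C₁ := by linarith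
  have hσbound : ∀ x ∈ S, sigmaM M x ≤ ENNReal.ofReal C₁ := by
    intro x hx
    have hb := sigma_bound (M := M) (x := x) (ρ := K₁) (T := tstar) hK₁
      (fun n => by
        rw [div_le_iff₀ hK₁]
        calc |x n| ≤ T := hcoord x hx n
          _ = tstar * K₁ := by rw [hTdef]; ring)
      hC₁ hC₁0
    calc sigmaM M x ≤ ENNReal.ofReal C₁ * sigmaM M (fun n => x n / K₁) := hb
      _ ≤ ENNReal.ofReal C₁ * 1 := mul_le_mul_right (hσS x hx) _
      _ = ENNReal.ofReal C₁ := mul_one _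
  have hMnn : ∀ z : ℕ → ℝ, ∀ n, (0:ℝ) ≤ M |z n| := fun z n => M_nonneg hM _ (abs_nonneg _)
  have hSsum : ∀ x ∈ S, Summable (fun n => M |x n|) ∧ ∑' n, M |x n| ≤ C₁ :=
    fun x hx => sigma_real_bound hC₁0 (hσbound x hx) (hMnn x)
  refine ⟨?_, fun a b ha hb x hx => gA_add hM hnd hΔ a b ha hb x hx,
    fun a c _ x _ => gA_smul a c x, ?_, ?_, ?_, ?_, ?_, ?_⟩
  -- conjunct 1: continuity and boundedness
  · intro a ha
    obtain ⟨A, hA⟩ := ha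
    have hA0 : (0:ℝ) ≤ A := le_trans (abs_nonneg _) (hA 0)
    constructor
    · intro x hx ε hε
      obtain ⟨C₂, hC₂1, hC₂⟩ := M_doubling hM hnd hΔ T hT
      set Q : ℝ := (C₂ - 1) * C₁ + 1 with hQdef
      have hQ1 : (1:ℝ) ≤ Q := by nlinarith
      have hQ0 : (0:ℝ) < Q := by linarith
      set σ' : ℝ := min (1/2) (ε / (4*(A+1)*Q)) with hσ'def
      have hσ'pos : 0 < σ' := lt_min (by norm_num) (by positivity)
      have hσ'le : σ' ≤ 1 := le_trans (min_le_left _ _) (by norm_num)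
      set δ : ℝ := σ' / (1 + σ') with hδdef
      have hδpos : 0 < δ := by positivity
      refine ⟨δ, hδpos, fun y hy hnear => ?_⟩
      obtain ⟨hsx, hbx⟩ := hSsum x hx
      obtain ⟨hsy, hby⟩ := hSsum y hy
      have hz : MemLM M (fun n => x n - y n) := memLM_sub hM (hSsub x hx) (hSsub y hy)
      have hz' : MemLM M (fun n => (x n - y n)) := hz
      have hσz : sigmaM M (fun n => (x n - y n) / δ) ≤ 1 :=
        sigma_le_one_of_norm_lt hM hz hnear
      obtain ⟨hsd0, hbd2'⟩ := sigma_real_bound (M := M) (z := fun n => (x n - y n)/δ)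
        zero_le_one (by rw [ENNReal.ofReal_one]; exact hσz) (hMnn _)
      have hsd : Summable fun n => M |(x n - y n)/δ| := by simpa using hsd0
      have hbd2 : (∑' n, M |(x n - y n)/δ|) ≤ 1 := by simpa using hbd2'
      have hkey : ∀ n, |M (|x n|) - M (|y n|)| ≤
          σ' * (C₂ - 1) * (M |x n| + M |y n|) + 2 * (σ' * M |(x n - y n)/δ|) := by
        intro n
        have hdeq : (1 + 1/σ') * |x n - y n| = |(x n - y n)/δ| := by
          rw [abs_div, abs_of_pos hδpos, hδdef]
          field_simp
          ring
        have hMd : 0 ≤ M |(x n - y n)/δ| := M_nonneg hM _ (abs_nonneg _)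
        have hMx : 0 ≤ M |x n| := hMnn x n
        have hMy : 0 ≤ M |y n| := hMnn y n
        have h1 := M_diff_one hM (u := |x n|) (v := |y n|) (d := |x n - y n|)
          (abs_nonneg _) (abs_nonneg _) (hcoord y hy n) (abs_nonneg _)
          (abs_sub_abs_le_abs_sub _ _) hσ'pos hσ'le hC₂ hC₂1
        have h2 := M_diff_one hM (u := |y n|) (v := |x n|) (d := |x n - y n|)
          (abs_nonneg _) (abs_nonneg _) (hcoord x hx n) (abs_nonneg _)
          (by rw [abs_sub_comm]; exact abs_sub_abs_le_abs_sub _ _) hσ'pos hσ'le hC₂ hC₂1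
        rw [hdeq] at h1 h2
        rw [abs_sub_le_iff]
        constructor <;>
          nlinarith [mul_nonneg (mul_nonneg hσ'pos.le (sub_nonneg.2 hC₂1)) hMx,
            mul_nonneg (mul_nonneg hσ'pos.le (sub_nonneg.2 hC₂1)) hMy,
            mul_nonneg hσ'pos.le hMd]
      set R : ℕ → ℝ := fun n =>
        σ' * (C₂ - 1) * (M |x n| + M |y n|) + 2 * (σ' * M |(x n - y n)/δ|) with hRdef
      have hsR : Summable R := ((hsx.add hsy).mul_left _).add ((hsd.mul_left σ').mul_left 2)
      have hsdiff : Summable fun n => |M (|x n|) - M (|y n|)| :=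
        Summable.of_nonneg_of_le (fun n => abs_nonneg _) hkey hsR
      have hDle : (∑' n, |M (|x n|) - M (|y n|)|) ≤ σ' * (C₂ - 1) * (2*C₁) + 2 * σ' := by
        have ht1 : (∑' n, (M |x n| + M |y n|)) ≤ 2*C₁ := by
          rw [Summable.tsum_add hsx hsy]; linarith
        calc (∑' n, |M (|x n|) - M (|y n|)|) ≤ ∑' n, R n := Summable.tsum_le_tsum hkey hsdiff hsR
          _ = σ' * (C₂ - 1) * (∑' n, (M |x n| + M |y n|)) +
              2 * (σ' * ∑' n, M |(x n - y n)/δ|) := by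
              rw [hRdef, Summable.tsum_add (((hsx.add hsy)).mul_left _)
                ((hsd.mul_left σ').mul_left 2), tsum_mul_left, tsum_mul_left, tsum_mul_left]
          _ ≤ σ' * (C₂ - 1) * (2*C₁) + 2 * σ' := by
              have hcoef : 0 ≤ σ' * (C₂ - 1) := mul_nonneg hσ'pos.le (by linarith)
              have h1 := mul_le_mul_of_nonneg_left ht1 hcoef
              have h2 := mul_le_mul_of_nonneg_left hbd2 hσ'pos.le
              linarith
      obtain ⟨haxabs, hax⟩ := summable_mul_abs hM hsx hA
      obtain ⟨hayabs, hay⟩ := summable_mul_abs hM hsy hA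
      have hnorm : Summable fun n => ‖a n * M |x n| - a n * M |y n|‖ := by
        refine Summable.of_nonneg_of_le (fun n => norm_nonneg _) (fun n => ?_)
          (hsdiff.mul_left A)
        rw [Real.norm_eq_abs, ← mul_sub, abs_mul]
        exact mul_le_mul_of_nonneg_right (hA n) (abs_nonneg _)
      calc |gA M a x - gA M a y|
          = |∑' n, (a n * M |x n| - a n * M |y n|)| := by
            rw [Summable.tsum_sub hax hay]; rfl
        _ = ‖∑' n, (a n * M |x n| - a n * M |y n|)‖ := (Real.norm_eq_abs _).symm
        _ ≤ ∑' n, ‖a n * M |x n| - a n * M |y n|‖ := norm_tsum_le_tsum_norm hnorm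
        _ ≤ ∑' n, A * |M (|x n|) - M (|y n|)| := by
            refine Summable.tsum_le_tsum (fun n => ?_) hnorm (hsdiff.mul_left A)
            rw [Real.norm_eq_abs, ← mul_sub, abs_mul]
            exact mul_le_mul_of_nonneg_right (hA n) (abs_nonneg _)
        _ = A * ∑' n, |M (|x n|) - M (|y n|)| := tsum_mul_left
        _ ≤ A * (σ' * (C₂ - 1) * (2*C₁) + 2 * σ') := mul_le_mul_of_nonneg_left hDle hA0
        _ = 2 * σ' * A * Q := by rw [hQdef]; ring
        _ < ε := by
            have hσ'2 : σ' ≤ ε / (4*(A+1)*Q) := min_le_right _ _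
            have h8 : σ' * (4*(A+1)*Q) ≤ ε := by
              rw [← le_div_iff₀ (by positivity)]; exact hσ'2
            nlinarith
    · refine ⟨A * C₁, fun x hx => ?_⟩
      obtain ⟨hsum, hbound⟩ := hSsum x hx
      obtain ⟨habs, hsm⟩ := summable_mul_abs hM hsum hA
      calc |gA M a x| = ‖∑' n, a n * M |x n|‖ := (Real.norm_eq_abs _).symm
        _ ≤ ∑' n, ‖a n * M |x n|‖ := norm_tsum_le_tsum_norm
              (habs.congr fun n => (Real.norm_eq_abs _).symm)
        _ ≤ ∑' n, A * M |x n| := by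
              refine Summable.tsum_le_tsum (fun n => ?_)
                (habs.congr fun n => (Real.norm_eq_abs _).symm) (hsum.mul_left A)
              rw [Real.norm_eq_abs, abs_mul, abs_of_nonneg (hMnn x n)]
              exact mul_le_mul_of_nonneg_right (hA n) (hMnn x n)
        _ = A * ∑' n, M |x n| := tsum_mul_left
        _ ≤ A * C₁ := by nlinarith
  -- conjunct 4: norm axioms
  · intro a ha
    refine ⟨Real.iSup_nonneg fun n => abs_nonneg _, ?_, ?_⟩
    · intro h
      funext n
      have h1 : |a n| ≤ 0 := h ▸ le_ciSup (bddAbove_abs ha) n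
      simpa using abs_nonpos_iff.1 h1
    · rintro rfl
      simp [ciSup_const]
  -- conjunct 5: triangle
  · intro a b ha hb
    exact ciSup_le fun n => (abs_add_le _ _).trans
      (add_le_add (le_ciSup (bddAbove_abs ha) n) (le_ciSup (bddAbove_abs hb) n))
  -- conjunct 6: scalar
  · intro a c _
    simp_rw [abs_mul]
    exact (Real.mul_iSup_of_nonneg (abs_nonneg c) _).symm
  -- conjunct 7: domination
  · refine ⟨C₁ + 1, by linarith, fun a ha x hx => ?_⟩
    obtain ⟨hsum, hbound⟩ := hSsum x hx
    obtain ⟨A, hA⟩ := ha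
    have hsup0 : 0 ≤ ⨆ n, |a n| := Real.iSup_nonneg fun n => abs_nonneg _
    have hle : ∀ n, |a n| ≤ ⨆ m, |a m| := fun n => le_ciSup (bddAbove_abs ⟨A, hA⟩) n
    obtain ⟨habs, hsm⟩ := summable_mul_abs hM hsum hA
    have hs2 : Summable fun n => (⨆ m, |a m|) * M |x n| := hsum.mul_left _
    calc |gA M a x| = ‖∑' n, a n * M |x n|‖ := (Real.norm_eq_abs _).symm
      _ ≤ ∑' n, ‖a n * M |x n|‖ := norm_tsum_le_tsum_norm
            (habs.congr fun n => (Real.norm_eq_abs _).symm)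
      _ ≤ ∑' n, (⨆ m, |a m|) * M |x n| := by
            refine Summable.tsum_le_tsum (fun n => ?_)
              (habs.congr fun n => (Real.norm_eq_abs _).symm) hs2
            rw [Real.norm_eq_abs, abs_mul, abs_of_nonneg (hMnn x n)]
            exact mul_le_mul_of_nonneg_right (hle n) (hMnn x n)
      _ = (⨆ m, |a m|) * ∑' n, M |x n| := tsum_mul_left
      _ ≤ (C₁ + 1) * ⨆ n, |a n| := by nlinarith
  -- conjunct 8: completeness
  · intro u hu hc
    have hbd : ∀ j k, BddAbove (Set.range fun n => |u j n - u k n|) := by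
      intro j k
      obtain ⟨A, hA⟩ := hu j; obtain ⟨B, hB⟩ := hu k
      refine ⟨A + B, ?_⟩
      rintro _ ⟨n, rfl⟩
      exact (abs_sub _ _).trans (add_le_add (hA n) (hB n))
    have hlim : ∀ n, ∃ L, Tendsto (fun k => u k n) atTop (𝓝 L) := by
      intro n
      refine cauchySeq_tendsto_of_complete ?_
      rw [Metric.cauchySeq_iff]
      intro η hη
      obtain ⟨K₀, hK₀⟩ := hc (η/2) (by linarith)
      refine ⟨K₀, fun j hj k hk => ?_⟩
      rw [Real.dist_eq]
      calc |u j n - u k n| ≤ ⨆ m, |u j m - u k m| := le_ciSup (hbd j k) n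
        _ ≤ η/2 := hK₀ j hj k hk
        _ < η := by linarith
    choose aa haa using hlim
    have key : ∀ η : ℝ, ∀ K₀, (∀ j ≥ K₀, ∀ k ≥ K₀, (⨆ n, |u j n - u k n|) ≤ η) →
        ∀ k ≥ K₀, ∀ n, |u k n - aa n| ≤ η := by
      intro η K₀ h k hk n
      have ht : Tendsto (fun j => |u k n - u j n|) atTop (𝓝 |u k n - aa n|) :=
        (tendsto_const_nhds.sub (haa n)).abs
      refine le_of_tendsto ht ?_
      filter_upwards [eventually_ge_atTop K₀] with j hj
      exact (le_ciSup (hbd k j) n).trans (h k hk j hj)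
    refine ⟨aa, ⟨?_, ?_⟩⟩
    · obtain ⟨K₀, hK₀⟩ := hc 1 one_pos
      obtain ⟨A, hA⟩ := hu K₀
      refine ⟨A + 1, fun n => ?_⟩
      have h1 := key 1 K₀ hK₀ K₀ (le_refl _) n
      have h2 : |aa n| - |u K₀ n| ≤ |aa n - u K₀ n| := abs_sub_abs_le_abs_sub _ _
      rw [abs_sub_comm] at h2
      linarith [hA n]
    · rw [Metric.tendsto_atTop]
      intro η hη
      obtain ⟨K₀, hK₀⟩ := hc (η/2) (by linarith)
      refine ⟨K₀, fun k hk => ?_⟩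
      have h2 : (⨆ n, |u k n - aa n|) ≤ η/2 := ciSup_le (key (η/2) K₀ hK₀ k hk)
      have h3 : 0 ≤ ⨆ n, |u k n - aa n| := Real.iSup_nonneg fun n => abs_nonneg _
      rw [Real.dist_eq, sub_zero, abs_of_nonneg h3]
      linarith
  -- conjunct 9: localization
  · intro ε hε
    obtain ⟨C₃, hC₃1, hC₃⟩ := M_scale hM hnd hΔ T hT (1/ε) (by positivity)
    have hC₃0 : (0:ℝ) < C₃ := by linarith
    refine ⟨ε/(8*C₃), by positivity, fun x hx => ?_⟩
    set δ : ℝ := ε/(8*C₃) with hδdef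
    have hδpos : 0 < δ := by positivity
    obtain ⟨hsx, hbx⟩ := hSsum x hx
    obtain ⟨N, hN⟩ : ∃ N, (∑' k, M |x (k+N)|) ≤ δ/ε := by
      have ht : Tendsto (fun i => ∑' k, M |x (k+i)|) atTop (𝓝 0) := by
        have := tendsto_sum_nat_add (fun n => M |x n|)
        exact this
      have hev := ht.eventually_lt_const (show (0:ℝ) < δ/ε by positivity)
      obtain ⟨N, hN⟩ := hev.exists
      exact ⟨N, hN.le⟩
    set a : ℕ → ℝ := fun n => if n < N then 0 else ε with hadef
    have ha_nonneg : ∀ n, 0 ≤ a n := by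
      intro n; rw [hadef]; dsimp only; split_ifs
      · exact le_refl 0
      · exact hε.le
    have ha_bdd : ∀ n, |a n| ≤ ε := by
      intro n
      rw [abs_of_nonneg (ha_nonneg n), hadef]; dsimp only; split_ifs
      · exact hε.le
      · exact le_refl ε
    have hgA : ∀ w : ℕ → ℝ, Summable (fun n => M |w n|) →
        gA M a w = ε * ∑' k, M |w (k+N)| := by
      intro w hsw
      have hf : Summable fun n => a n * M |w n| := (summable_mul_abs hM hsw ha_bdd).2
      have hsplit := Summable.sum_add_tsum_nat_add (f := fun n => a n * M |w n|) N hf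
      have hhead : (∑ i ∈ Finset.range N, a i * M |w i|) = 0 :=
        Finset.sum_eq_zero fun i hi => by
          rw [hadef]; dsimp only; rw [if_pos (Finset.mem_range.1 hi), zero_mul]
      have htail : ∀ i : ℕ, a (i+N) * M |w (i+N)| = ε * M |w (i+N)| := fun i => by
        rw [hadef]; dsimp only; rw [if_neg (by omega)]
      calc gA M a w = ∑' n, a n * M |w n| := rfl
        _ = (∑ i ∈ Finset.range N, a i * M |w i|) + ∑' i, a (i+N) * M |w (i+N)| :=
            hsplit.symm
        _ = ∑' i, ε * M |w (i+N)| := by rw [hhead, zero_add]; exact tsum_congr htail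
        _ = ε * ∑' i, M |w (i+N)| := tsum_mul_left
    have hgnn : ∀ b ∈ gA M a '' S, 0 ≤ b := by
      rintro b ⟨y, hy, rfl⟩
      rw [hgA y (hSsum y hy).1]
      exact mul_nonneg hε.le (tsum_nonneg fun k => M_nonneg hM _ (abs_nonneg _))
    have hInf0 : 0 ≤ sInf (gA M a '' S) := Real.sInf_nonneg hgnn
    have hgx : gA M a x ≤ δ := by
      rw [hgA x hsx]
      calc ε * ∑' k, M |x (k+N)| ≤ ε * (δ/ε) := mul_le_mul_of_nonneg_left hN hε.le
        _ = δ := by field_simp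
    have hInfle : sInf (gA M a '' S) ≤ gA M a x :=
      csInf_le ⟨0, fun b hb => hgnn b hb⟩ ⟨x, hx, rfl⟩
    have hΩtail : ∀ y ∈ S, gA M a y ≤ sInf (gA M a '' S) + 3*δ →
        (∑' k, M |y (k+N)|) ≤ 4*δ/ε := by
      intro y hy hgy
      rw [hgA y (hSsum y hy).1] at hgy
      rw [le_div_iff₀ hε]
      nlinarith [hInfle, hgx]
    -- the finite net
    obtain ⟨γ₀, hγ₀pos, hγ₀⟩ := M_small hM (1/(2*(N+1))) (by positivity)
    set γ : ℝ := γ₀ * ε with hγdef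
    have hγpos : 0 < γ := by positivity
    set G : Finset ℤ := Finset.Icc ⌊-T/γ⌋ ⌊T/γ⌋ with hG
    set emb : (Fin N → ℤ) → (ℕ → ℝ) :=
      fun v n => if h : n < N then γ * (v ⟨n, h⟩ : ℝ) else 0 with hemb
    set F : Set (ℕ → ℝ) := emb '' (Set.univ.pi fun _ => (G : Set ℤ)) with hF
    have hFfin : F.Finite := (Set.Finite.pi fun _ => G.finite_toSet).image emb
    have hFmem : ∀ f ∈ F, MemLM M f := by
      rintro f ⟨v, hv, rfl⟩
      constructor
      · refine ⟨γ * (|((⌊-T/γ⌋ : ℤ) : ℝ)| + |((⌊T/γ⌋ : ℤ) : ℝ)|), fun n => ?_⟩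
        rw [hemb]; dsimp only
        split_ifs with h
        · rw [abs_mul, abs_of_pos hγpos]
          refine mul_le_mul_of_nonneg_left ?_ hγpos.le
          have hmem := hv ⟨n, h⟩ (Set.mem_univ _)
          rw [hG, Finset.mem_coe, Finset.mem_Icc] at hmem
          have h1 : ((⌊-T/γ⌋ : ℤ) : ℝ) ≤ ((v ⟨n, h⟩ : ℤ) : ℝ) := by exact_mod_cast hmem.1
          have h2 : ((v ⟨n, h⟩ : ℤ) : ℝ) ≤ ((⌊T/γ⌋ : ℤ) : ℝ) := by exact_mod_cast hmem.2
          rw [abs_le]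
          constructor
          · have := neg_abs_le (((⌊-T/γ⌋ : ℤ) : ℝ))
            have h3 := abs_nonneg (((⌊T/γ⌋ : ℤ) : ℝ))
            linarith
          · have := le_abs_self (((⌊T/γ⌋ : ℤ) : ℝ))
            have h3 := abs_nonneg (((⌊-T/γ⌋ : ℤ) : ℝ))
            linarith
        · rw [abs_zero]; positivity
      · refine ⟨1, one_pos, ?_⟩
        have hzero : ∀ i : ℕ, ENNReal.ofReal (M |emb v (i+N) / 1|) = 0 := by
          intro i
          rw [hemb]; dsimp only
          rw [dif_neg (by omega)]
          simp [hM.map_zero]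
        have hsplit := Summable.sum_add_tsum_nat_add'
          (f := fun n => ENNReal.ofReal (M |emb v n / 1|)) (k := N) ENNReal.summable
        show (∑' n, ENNReal.ofReal (M |emb v n / 1|)) ≠ ⊤
        rw [← hsplit]
        have htail0 : (∑' i, ENNReal.ofReal (M |emb v (i+N) / 1|)) = 0 := by
          rw [tsum_congr hzero]; exact tsum_zero
        rw [htail0, add_zero]
        exact (ENNReal.sum_lt_top.2 fun i _ => ENNReal.ofReal_lt_top).ne
    refine ⟨a, ha_nonneg, ⟨ε, ha_bdd⟩, ciSup_le ha_bdd, by linarith, ?_⟩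
    refine sInf_le ⟨ENNReal.ofReal_pos.2 hε, F, hFfin, hFmem, ?_⟩
    rintro y ⟨hy, hgy⟩
    have hytail : (∑' k, M |y (k+N)|) ≤ 4*δ/ε := hΩtail y hy hgy
    have hsy := (hSsum y hy).1
    set v : Fin N → ℤ := fun i => ⌊y i.1 / γ⌋ with hvdef
    have hvG : v ∈ Set.univ.pi fun _ : Fin N => (G : Set ℤ) := by
      intro i _
      rw [hG, Finset.mem_coe, Finset.mem_Icc]
      have hyi := abs_le.1 (hcoord y hy i.1)
      constructor
      · exact Int.floor_mono (by gcongr; exact hyi.1)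
      · exact Int.floor_mono (by gcongr; exact hyi.2)
    refine ⟨emb v, ⟨v, hvG, rfl⟩, ENNReal.ofReal_le_ofReal ?_⟩
    refine luxNorm_le hε ?_
    have hsplit := Summable.sum_add_tsum_nat_add'
      (f := fun n => ENNReal.ofReal (M |(y n - emb v n) / ε|)) (k := N) ENNReal.summable
    show (∑' n, ENNReal.ofReal (M |(y n - emb v n) / ε|)) ≤ 1
    rw [← hsplit]
    have hhead : (∑ i ∈ Finset.range N, ENNReal.ofReal (M |(y i - emb v i) / ε|)) ≤ 1/2 := by
      refine head_sum_le_half fun i hi => ?_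
      have hembi : emb v i = γ * ((⌊y i / γ⌋ : ℤ) : ℝ) := by
        rw [hemb]; dsimp only; rw [dif_pos hi]
      have hfl1 : γ * ((⌊y i / γ⌋ : ℤ) : ℝ) ≤ y i := by
        have h := Int.floor_le (y i / γ)
        have h2 := mul_le_mul_of_nonneg_right h hγpos.le
        rw [div_mul_cancel₀ _ hγpos.ne'] at h2
        linarith [mul_comm γ ((⌊y i / γ⌋ : ℤ) : ℝ)]
      have hfl2 : y i - γ * ((⌊y i / γ⌋ : ℤ) : ℝ) ≤ γ := by
        have h := (Int.lt_floor_add_one (y i / γ)).le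
        have h2 := mul_le_mul_of_nonneg_right h hγpos.le
        rw [div_mul_cancel₀ _ hγpos.ne'] at h2
        nlinarith
      have habs : |(y i - emb v i) / ε| ≤ γ₀ := by
        rw [abs_div, abs_of_pos hε, div_le_iff₀ hε, hembi,
          abs_of_nonneg (by linarith : (0:ℝ) ≤ y i - γ * ((⌊y i / γ⌋ : ℤ) : ℝ))]
        calc y i - γ * ((⌊y i / γ⌋ : ℤ) : ℝ) ≤ γ := hfl2
          _ = γ₀ * ε := hγdef
      exact hγ₀ _ (abs_nonneg _) habs
    have htail : (∑' i, ENNReal.ofReal (M |(y (i+N) - emb v (i+N)) / ε|)) ≤ 1/2 := by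
      have hemb0 : ∀ i : ℕ, emb v (i+N) = 0 := by
        intro i; rw [hemb]; dsimp only; rw [dif_neg (by omega)]
      have hterm : ∀ i : ℕ, ENNReal.ofReal (M |(y (i+N) - emb v (i+N)) / ε|) ≤
          ENNReal.ofReal C₃ * ENNReal.ofReal (M |y (i+N)|) := by
        intro i
        rw [hemb0 i, sub_zero, ← ENNReal.ofReal_mul hC₃0.le]
        refine ENNReal.ofReal_le_ofReal ?_
        have heq : |y (i+N) / ε| = (1/ε) * |y (i+N)| := by
          rw [abs_div, abs_of_pos hε]; ring
        rw [heq]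
        exact hC₃ _ (abs_nonneg _) (hcoord y hy _)
      calc (∑' i, ENNReal.ofReal (M |(y (i+N) - emb v (i+N)) / ε|))
          ≤ ∑' i, ENNReal.ofReal C₃ * ENNReal.ofReal (M |y (i+N)|) :=
            ENNReal.tsum_le_tsum hterm
        _ = ENNReal.ofReal C₃ * ENNReal.ofReal (∑' i, M |y (i+N)|) := by
            rw [ENNReal.tsum_mul_left, ENNReal.ofReal_tsum_of_nonneg
              (fun i => M_nonneg hM _ (abs_nonneg _)) ((summable_nat_add_iff N).2 hsy)]
        _ ≤ ENNReal.ofReal C₃ * ENNReal.ofReal (4*δ/ε) :=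
            mul_le_mul_right (ENNReal.ofReal_le_ofReal hytail) _
        _ = ENNReal.ofReal (C₃ * (4*δ/ε)) := (ENNReal.ofReal_mul hC₃0.le).symm
        _ = ENNReal.ofReal (1/2) := by
            congr 1
            rw [hδdef]
            field_simp
            ring
        _ ≤ 1/2 := by
            rw [show (1:ENNReal)/2 = ENNReal.ofReal (1/2) by
              rw [ENNReal.ofReal_div_of_pos] <;> norm_num]
    calc (∑ i ∈ Finset.range N, ENNReal.ofReal (M |(y i - emb v i) / ε|)) +
          ∑' i, ENNReal.ofReal (M |(y (i+N) - emb v (i+N)) / ε|)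
        ≤ (1:ENNReal)/2 + 1/2 := add_le_add hhead htail
      _ = 1 := ENNReal.add_halves 1
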